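/- Let {H_x}_{x∈X} be a consistent selection of subgroups for the cocycle f. If for some point x ∈ X the T_f-orbit closure of (x, H_x) in X × G/H_x is compact, then for every y ∈ X the T_f-orbit closure of (y, H_y) in X × G/H_y is compact. -/

import Mathlib

open Topology Pointwise Set Filter

section Defs

variable {X : Type*} [TopologicalSpace X] {G : Type*} [TopologicalSpace G] [Group G]

/-- The positive-iterate part of the cocycle generated by `f` over `T`:
`f(n,x) = f(T^{n-1}x) ⋯ f(Tx) · f(x)` for `n ≥ 1` and `f(0,x) = e`. -/
def cocycleNat (T : X ≃ₜ X) (f : X → G) : ℕ → X → G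
  | 0, _ => 1
  | n + 1, x => f ((T.toEquiv ^ n) x) * cocycleNat T f n x

/-- The cocycle generated by `f` over `T`, at integer times:
`f(n,x)` as above for `n ≥ 0` and `f(n,x) = f(-n, T^n x)⁻¹` for `n < 0`. -/
def cocycle (T : X ≃ₜ X) (f : X → G) (n : ℤ) (x : X) : G :=
  if 0 ≤ n then cocycleNat T f n.toNat x
  else (cocycleNat T f (-n).toNat ((T.toEquiv ^ n) x))⁻¹

/-- The `n`-th power of the skew product `T_f` on `X × G`:
`T_f^n (x,g) = (T^n x, f(n,x)·g)`. -/
def skewPow (T : X ≃ₜ X) (f : X → G) (n : ℤ) (p : X × G) : X × G :=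
  ((T.toEquiv ^ n) p.1, cocycle T f n p.1 * p.2)

/-- The `n`-th power of the skew product `T_f` acting on `X × G/H`:
`T_f^n (x, gH) = (T^n x, f(n,x)·gH)`. -/
def skewPowQ (T : X ≃ₜ X) (f : X → G) (H : Subgroup G) (n : ℤ) (p : X × (G ⧸ H)) :
    X × (G ⧸ H) :=
  ((T.toEquiv ^ n) p.1, cocycle T f n p.1 • p.2)

/-- The local essential range `E_x(f)`: all `g ∈ G` such that for every open
neighbourhood `U` of `x` and every open neighbourhood `V` of the identity there are
`n ∈ ℤ` and `y ∈ U ∩ T⁻ⁿU` with `f(n,y) ∈ V·g`. -/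
def essRange (T : X ≃ₜ X) (f : X → G) (x : X) : Set G :=
  {g | ∀ U : Set X, IsOpen U → x ∈ U → ∀ V : Set G, IsOpen V → (1 : G) ∈ V →
    ∃ n : ℤ, ∃ y ∈ U, (T.toEquiv ^ n) y ∈ U ∧ ∃ v ∈ V, cocycle T f n y = v * g}

/-- `P_x(f)`: the vertical section at `x` of the closure of the `T_f`-orbit of `(x,e)`. -/
def Pset (T : X ≃ₜ X) (f : X → G) (x : X) : Set G :=
  {g | (x, g) ∈ closure (Set.range fun n : ℤ => skewPow T f n (x, 1))}

/-- `𝒟(f) = {x : E_x(f) = P_x(f)}`. -/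
def Dset (T : X ≃ₜ X) (f : X → G) : Set X :=
  {x | essRange T f x = Pset T f x}

/-- Topological recurrence of the cocycle generated by `f`: for every open
neighbourhood `V` of the identity of `G` and every nonempty open `U ⊆ X` there is
`n ≠ 0` with `T⁻ⁿU ∩ U ∩ {x : f(n,x) ∈ V} ≠ ∅`. -/
def IsRecurrentCocycle (T : X ≃ₜ X) (f : X → G) : Prop :=
  ∀ V : Set G, IsOpen V → (1 : G) ∈ V → ∀ U : Set X, IsOpen U → U.Nonempty →
    ∃ n : ℤ, n ≠ 0 ∧ ∃ x ∈ U, (T.toEquiv ^ n) x ∈ U ∧ cocycle T f n x ∈ V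

/-- Minimality of a homeomorphism: every orbit is dense. -/
def IsMinimal (T : X ≃ₜ X) : Prop :=
  ∀ x : X, Dense (Set.range fun n : ℤ => (T.toEquiv ^ n) x)

/-- A consistent selection of subgroups for the cocycle generated by `f`: a family of
closed subgroups `H x ⊆ E_x(f)` with `H (Tⁿx) = f(n,x)·(H x)·f(n,x)⁻¹` depending
continuously on `x` for the Fell topology. -/
structure IsConsistentSelection (T : X ≃ₜ X) (f : X → G) (H : X → Subgroup G) : Prop where
  isClosed : ∀ x : X, IsClosed (H x : Set G)
  subset_essRange : ∀ x : X, (H x : Set G) ⊆ essRange T f x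
  conj : ∀ (x : X) (n : ℤ), (H ((T.toEquiv ^ n) x) : Set G) =
    (fun h => cocycle T f n x * h * (cocycle T f n x)⁻¹) '' (H x : Set G)
  fell_compact : ∀ (x : X) (K : Set G), IsCompact K → K ∩ (H x : Set G) = ∅ →
    ∃ W ∈ 𝓝 x, ∀ y ∈ W, K ∩ (H y : Set G) = ∅
  fell_open : ∀ (x : X) (O : Set G), IsOpen O → (O ∩ (H x : Set G)).Nonempty →
    ∃ W ∈ 𝓝 x, ∀ y ∈ W, (O ∩ (H y : Set G)).Nonempty

/-- The `T_f`-orbit closure of a point of `X × G`. -/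
def orbitClosure (T : X ≃ₜ X) (f : X → G) (p : X × G) : Set (X × G) :=
  closure (Set.range fun n : ℤ => skewPow T f n p)

/-- For `C ⊆ X × G`, the set `H = {g : C·g⁻¹ = C}`, where `C·g = {(y, c·g) : (y,c) ∈ C}`. -/
def stabSet (C : Set (X × G)) : Set G :=
  {g : G | (fun p : X × G => (p.1, p.2 * g⁻¹)) '' C = C}

/-- A strongly regular orbit closure: a `T_f`-orbit closure which projects onto all
of `X` and all of whose vertical sections are single left cosets of
`H = {g : C·g⁻¹ = C}`. -/
def IsStronglyRegularOC (T : X ≃ₜ X) (f : X → G) (C : Set (X × G)) : Prop :=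
  (∃ p : X × G, C = orbitClosure T f p) ∧ Prod.fst '' C = Set.univ ∧
    ∀ x : X, ∃ gx : G, {g : G | (x, g) ∈ C} = {gx} * stabSet C

/-- A strongly regular cocycle: one whose skew product admits a strongly regular
orbit closure. -/
def IsStronglyRegularCocycle (T : X ≃ₜ X) (f : X → G) : Prop :=
  ∃ C : Set (X × G), IsStronglyRegularOC T f C

/-- A regular cocycle: some `T_f`-orbit closure projects onto all of `X`. -/
def IsRegularCocycle (T : X ≃ₜ X) (f : X → G) : Prop :=
  ∃ p : X × G, Prod.fst '' orbitClosure T f p = Set.univ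

end Defs

/-!
If the orbit closure of `(x, H_x)` is compact, then `f(n,x) ∈ K·H_x` for all `n` and a compact
`K ⊆ G`. The conjugation rule `H_{Tᵐx} = f(m,x) H_x f(m,x)⁻¹` moves this bound, with `K·K⁻¹` in
place of `K`, to every point of the `T`-orbit of `x`. Since `G` is locally compact, upper
semicontinuity of `z ↦ H_z` makes the bound a closed condition on `z`, so by minimality it holds at
every `y`, confining the orbit of `(y, H_y)` to the compact set `X × (K·K⁻¹·H_y)/H_y`.
-/

namespace Homeomorph

variable {X : Type*} [TopologicalSpace X]

theorem continuous_toEquiv_zpow (T : X ≃ₜ X) (n : ℤ) : Continuous (T.toEquiv ^ n) := by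
  have : (T ^ n).toEquiv = T.toEquiv ^ n :=
    map_zpow ({ toFun := Homeomorph.toEquiv, map_one' := rfl, map_mul' := fun _ _ => rfl } :
      (X ≃ₜ X) →* Equiv.Perm X) T n
  rw [← this]
  exact (T ^ n).continuous

end Homeomorph

section Cocycle

variable {X : Type*} [TopologicalSpace X] {G : Type*} [Group G] (T : X ≃ₜ X) (f : X → G)

theorem cocycleNat_add (a b : ℕ) (x : X) :
    cocycleNat T f (a + b) x = cocycleNat T f a ((T.toEquiv ^ b) x) * cocycleNat T f b x := by
  induction a with
  | zero => simp [cocycleNat]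
  | succ a ih =>
    rw [Nat.add_right_comm, cocycleNat, ih, cocycleNat, pow_add, Equiv.Perm.mul_apply, mul_assoc]

theorem cocycle_natCast (n : ℕ) (x : X) : cocycle T f n x = cocycleNat T f n x := by
  simp [cocycle]

theorem cocycle_neg_natCast (n : ℕ) (x : X) :
    cocycle T f (-n) x = (cocycleNat T f n ((T.toEquiv ^ (-n : ℤ)) x))⁻¹ := by
  cases n with
  | zero => simp [cocycle, cocycleNat]
  | succ n => rw [cocycle, if_neg (by omega), neg_neg, Int.toNat_natCast]

theorem cocycle_succ (n : ℤ) (x : X) :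
    cocycle T f (n + 1) x = f ((T.toEquiv ^ n) x) * cocycle T f n x := by
  obtain ⟨n, rfl | rfl⟩ := n.eq_nat_or_neg
  · rw [← Nat.cast_succ, cocycle_natCast, cocycle_natCast, cocycleNat, zpow_natCast]
  · cases n with
    | zero => simp [cocycle, cocycleNat]
    | succ n =>
      have hT :
          (T.toEquiv ^ 1) ((T.toEquiv ^ (-(n + 1 : ℕ) : ℤ)) x) = (T.toEquiv ^ (-n : ℤ)) x := by
        rw [← Equiv.Perm.mul_apply, ← zpow_natCast, ← zpow_add]
        congr 2
        push_cast
        ring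
      rw [show (-(n + 1 : ℕ) : ℤ) + 1 = -n by push_cast; ring, cocycle_neg_natCast,
        cocycle_neg_natCast, cocycleNat_add T f n 1, hT]
      simp [cocycleNat]

theorem cocycle_pred (n : ℤ) (x : X) :
    cocycle T f (n - 1) x = (f ((T.toEquiv ^ (n - 1)) x))⁻¹ * cocycle T f n x := by
  rw [eq_inv_mul_iff_mul_eq, ← cocycle_succ, sub_add_cancel]

theorem cocycle_add (m n : ℤ) (x : X) :
    cocycle T f (m + n) x = cocycle T f m ((T.toEquiv ^ n) x) * cocycle T f n x := by
  induction m using Int.induction_on with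
  | zero => simp [cocycle, cocycleNat]
  | succ m ih =>
    rw [add_right_comm, cocycle_succ, ih, cocycle_succ, ← mul_assoc, zpow_add, Equiv.Perm.mul_apply]
  | pred m ih =>
    rw [sub_add_eq_add_sub, cocycle_pred, ih, cocycle_pred, ← mul_assoc, ← sub_add_eq_add_sub,
      zpow_add, Equiv.Perm.mul_apply]

theorem skewPowQ_mk_one (K : Subgroup G) (n : ℤ) (x : X) :
    skewPowQ T f K n (x, (QuotientGroup.mk 1 : G ⧸ K)) =
      ((T.toEquiv ^ n) x, (QuotientGroup.mk (cocycle T f n x) : G ⧸ K)) := by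
  simp only [skewPowQ, MulAction.Quotient.smul_mk, smul_eq_mul, mul_one]

variable [TopologicalSpace G] [IsTopologicalGroup G] {f}

theorem continuous_cocycleNat (hf : Continuous f) (n : ℕ) : Continuous (cocycleNat T f n) := by
  induction n with
  | zero => exact continuous_const
  | succ n ih => exact (hf.comp (by simpa using T.continuous_toEquiv_zpow n)).mul ih

theorem continuous_cocycle (hf : Continuous f) (n : ℤ) : Continuous (cocycle T f n) := by
  obtain ⟨n, rfl | rfl⟩ := n.eq_nat_or_neg
  · exact (continuous_cocycleNat T hf n).congr fun x => (cocycle_natCast T f n x).symm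
  · exact ((continuous_cocycleNat T hf n).comp (T.continuous_toEquiv_zpow _)).inv.congr
      fun x => (cocycle_neg_natCast T f n x).symm

end Cocycle

theorem IsOpenMap.exists_isCompact_image_superset {α β : Type*} [TopologicalSpace α]
    [TopologicalSpace β] [WeaklyLocallyCompactSpace α] {π : α → β} (hπ : IsOpenMap π)
    (hsurj : Function.Surjective π) {Q : Set β} (hQ : IsCompact Q) :
    ∃ K : Set α, IsCompact K ∧ Q ⊆ π '' K := by
  have hnhds : ∀ q, ∃ K : Set α, IsCompact K ∧ π '' K ∈ 𝓝 q := fun q => by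
    obtain ⟨a, rfl⟩ := hsurj q
    obtain ⟨K, hK, hKa⟩ := exists_compact_mem_nhds a
    exact ⟨K, hK, hπ.image_mem_nhds hKa⟩
  choose K hK hKq using hnhds
  obtain ⟨t, -, hQt⟩ := hQ.elim_nhds_subcover (fun q => π '' K q) fun q _ => hKq q
  refine ⟨⋃ q ∈ t, K q, t.finite_toSet.isCompact_biUnion fun q _ => hK q, ?_⟩
  simpa only [image_iUnion₂] using hQt

theorem isClosed_setOf_exists_mem_of_isCompact {α β : Type*} [TopologicalSpace α]
    [TopologicalSpace β] {C : Set (α × β)} (hC : IsClosed C) {L : Set β} (hL : IsCompact L) :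
    IsClosed {a | ∃ b ∈ L, (a, b) ∈ C} := by
  have := isCompact_iff_compactSpace.mp hL
  convert isClosedMap_fst_of_compactSpace (X := α) (Y := L) _
    (hC.preimage (continuous_id.prodMap continuous_subtype_val)) using 1
  ext a
  simp

section Selection

variable {X : Type*} [TopologicalSpace X] {G : Type*} [TopologicalSpace G] [Group G]
  {T : X ≃ₜ X} {f : X → G} {H : X → Subgroup G}

theorem IsConsistentSelection.cocycle_mul_mul_inv_mem (hH : IsConsistentSelection T f H)
    {x : X} {h : G} (hh : h ∈ H x) (n : ℤ) :
    cocycle T f n x * h * (cocycle T f n x)⁻¹ ∈ H ((T.toEquiv ^ n) x) := by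
  rw [← SetLike.mem_coe, hH.conj x n]
  exact ⟨h, hh, rfl⟩

theorem IsConsistentSelection.isClosed_setOf_mem [LocallyCompactSpace G]
    (hH : IsConsistentSelection T f H) : IsClosed {p : X × G | p.2 ∈ H p.1} := by
  refine isOpen_compl_iff.mp (isOpen_iff_mem_nhds.mpr ?_)
  rintro ⟨z, g⟩ (hg : g ∉ H z)
  obtain ⟨K, hKg, hKH, hK⟩ := local_compact_nhds ((hH.isClosed z).isOpen_compl.mem_nhds hg)
  obtain ⟨W, hWz, hWK⟩ := hH.fell_compact z K hK
    (disjoint_iff_inter_eq_empty.mp (subset_compl_iff_disjoint_right.mp hKH))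
  filter_upwards [prod_mem_nhds hWz hKg] with ⟨z', g'⟩ ⟨hz', hg'⟩ hmem
  exact (hWK z' hz').subset ⟨hg', hmem⟩

theorem IsConsistentSelection.isClosed_setOf_cocycle_mem_mul [IsTopologicalGroup G]
    [LocallyCompactSpace G] (hH : IsConsistentSelection T f H) (hf : Continuous f) {L : Set G}
    (hL : IsCompact L) (n : ℤ) : IsClosed {z | cocycle T f n z ∈ L * (H z : Set G)} := by
  have hC : IsClosed {p : X × G | p.2⁻¹ * cocycle T f n p.1 ∈ H p.1} :=
    hH.isClosed_setOf_mem.preimage (continuous_fst.prodMk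
      (continuous_snd.inv.mul ((continuous_cocycle T hf n).comp continuous_fst)))
  convert isClosed_setOf_exists_mem_of_isCompact hC hL using 3 with z
  simp only [← QuotientGroup.preimage_image_mk_eq_mul, mem_preimage, mem_image, QuotientGroup.eq]
  rfl

/-- The orbit of `(z, H_z)` in `X × G/H_z` lies over the image of `L` in `G/H_z`. -/
def CocycleBoundedMod (T : X ≃ₜ X) (f : X → G) (H : X → Subgroup G) (L : Set G) (z : X) : Prop :=
  ∀ n : ℤ, cocycle T f n z ∈ L * (H z : Set G)

theorem IsConsistentSelection.isClosed_setOf_cocycleBoundedMod [IsTopologicalGroup G]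
    [LocallyCompactSpace G] (hH : IsConsistentSelection T f H) (hf : Continuous f) {L : Set G}
    (hL : IsCompact L) : IsClosed {z | CocycleBoundedMod T f H L z} := by
  simp only [CocycleBoundedMod, ofPred_forall]
  exact isClosed_iInter fun n => hH.isClosed_setOf_cocycle_mem_mul hf hL n

theorem CocycleBoundedMod.zpow_apply (hH : IsConsistentSelection T f H) {K : Set G} {x : X}
    (hx : CocycleBoundedMod T f H K x) (m : ℤ) :
    CocycleBoundedMod T f H (K * K⁻¹) ((T.toEquiv ^ m) x) := by
  intro n
  obtain ⟨k, hk, h, hh, hkh⟩ := hx (n + m)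
  obtain ⟨k', hk', h', hh', hkh'⟩ := hx m
  -- `f(n, Tᵐx) = f(n+m, x) f(m, x)⁻¹ = (k k'⁻¹) · f(m, x) (h'⁻¹ h) f(m, x)⁻¹` as `f(m, x) = k' h'`
  refine ⟨k * k'⁻¹, mul_mem_mul hk (inv_mem_inv.mpr hk'), _,
    hH.cocycle_mul_mul_inv_mem (mul_mem (inv_mem hh') hh) m, ?_⟩
  have hcocycle :
      cocycle T f n ((T.toEquiv ^ m) x) = cocycle T f (n + m) x * (cocycle T f m x)⁻¹ := by
    rw [cocycle_add, mul_inv_cancel_right]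
  rw [hcocycle, ← hkh, ← hkh']
  group

theorem exists_cocycleBoundedMod_of_isCompact_closure [IsTopologicalGroup G]
    [LocallyCompactSpace G] {x : X} (hx : IsCompact (closure
      (range fun n : ℤ => skewPowQ T f (H x) n (x, (QuotientGroup.mk 1 : G ⧸ H x))))) :
    ∃ K : Set G, IsCompact K ∧ CocycleBoundedMod T f H K x := by
  obtain ⟨K, hK, hQK⟩ := QuotientGroup.isOpenMap_coe.exists_isCompact_image_superset
    QuotientGroup.mk_surjective (hx.image continuous_snd)
  refine ⟨K, hK, fun n => ?_⟩
  rw [← QuotientGroup.preimage_image_mk_eq_mul]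
  exact hQK ⟨_, subset_closure ⟨n, rfl⟩, by simp only [skewPowQ_mk_one]⟩

theorem CocycleBoundedMod.isCompact_closure_range_skewPowQ [CompactSpace X] [IsTopologicalGroup G]
    {L : Set G} {y : X} (hy : CocycleBoundedMod T f H L y) (hL : IsCompact L)
    (hHy : IsClosed (H y : Set G)) : IsCompact (closure
      (range fun n : ℤ => skewPowQ T f (H y) n (y, (QuotientGroup.mk 1 : G ⧸ H y)))) := by
  have hLH : IsClosed (QuotientGroup.mk '' L : Set (G ⧸ H y)) := by
    rw [← (QuotientGroup.isQuotientMap_mk (H y)).isClosed_preimage,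
      QuotientGroup.preimage_image_mk_eq_mul]
    exact hHy.mul_left_of_isCompact hL
  refine (isCompact_univ.prod (hL.image QuotientGroup.continuous_mk)).of_isClosed_subset
    isClosed_closure (closure_minimal ?_ (isClosed_univ.prod hLH))
  rintro _ ⟨n, rfl⟩
  have hn := hy n
  rw [← QuotientGroup.preimage_image_mk_eq_mul] at hn
  simpa only [skewPowQ_mk_one, mem_prod, mem_univ, true_and, mem_preimage] using hn

end Selection

theorem statement_14_general
    {X : Type*} [TopologicalSpace X] [CompactSpace X]
    {G : Type*} [TopologicalSpace G] [Group G] [IsTopologicalGroup G]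
    [LocallyCompactSpace G]
    (T : X ≃ₜ X) (hT : IsMinimal T) (f : X → G) (hf : Continuous f)
    (H : X → Subgroup G) (hH : IsConsistentSelection T f H) (x : X)
    (hx : IsCompact (closure
      (Set.range fun n : ℤ => skewPowQ T f (H x) n (x, (QuotientGroup.mk 1 : G ⧸ H x))))) :
    ∀ y : X, IsCompact (closure
      (Set.range fun n : ℤ => skewPowQ T f (H y) n (y, (QuotientGroup.mk 1 : G ⧸ H y)))) := by
  intro y
  obtain ⟨K, hK, hxK⟩ := exists_cocycleBoundedMod_of_isCompact_closure hx
  have hy : CocycleBoundedMod T f H (K * K⁻¹) y :=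
    closure_minimal (range_subset_iff.mpr (hxK.zpow_apply hH))
      (hH.isClosed_setOf_cocycleBoundedMod hf (hK.mul hK.inv)) (hT x y)
  exact hy.isCompact_closure_range_skewPowQ (hK.mul hK.inv) (hH.isClosed y)

theorem statement_14
    {X : Type*} [TopologicalSpace X] [CompactSpace X] [TopologicalSpace.MetrizableSpace X]
    {G : Type*} [TopologicalSpace G] [Group G] [IsTopologicalGroup G]
    [LocallyCompactSpace G] [SecondCountableTopology G] [T2Space G]
    (T : X ≃ₜ X) (hT : IsMinimal T) (f : X → G) (hf : Continuous f)
    (H : X → Subgroup G) (hH : IsConsistentSelection T f H) (x : X)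
    (hx : IsCompact (closure
      (Set.range fun n : ℤ => skewPowQ T f (H x) n (x, (QuotientGroup.mk 1 : G ⧸ H x))))) :
    ∀ y : X, IsCompact (closure
      (Set.range fun n : ℤ => skewPowQ T f (H y) n (y, (QuotientGroup.mk 1 : G ⧸ H y)))) :=
  statement_14_general T hT f hf H hH x hx
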